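/- arXiv:2603.20438 — 3 statements merged into one kernel-verified Lean document; each statement's English description precedes it below -/
import Mathlib

section
/- For matrices A ∈ ℝ^{n×n}, B ∈ ℝ^{n×m}, E ∈ ℝ^{n×ℓ}, H ∈ ℝ^{p×n}, and F ∈ ℝ^{m×n}, if there exist V ∈ ℝ^{n×k} and X ∈ ℝ^{k×k} with (A+BF)V = VX, range(E) ⊆ range(V), and range(V) ⊆ ker(H), then H·(A+BF)^j·E = 0 for every natural number j. -/
open Matrix

/-- If there exist `V, X` with `(A+BF)V = VX`, `range E ⊆ range V ⊆ ker H`, then all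
Markov parameters `H (A+BF)^j E` vanish. -/
theorem markov_parameters_vanish {n m l p k : ℕ}
    (A : Matrix (Fin n) (Fin n) ℝ) (B : Matrix (Fin n) (Fin m) ℝ)
    (E : Matrix (Fin n) (Fin l) ℝ) (H : Matrix (Fin p) (Fin n) ℝ)
    (F : Matrix (Fin m) (Fin n) ℝ)
    (V : Matrix (Fin n) (Fin k) ℝ) (X : Matrix (Fin k) (Fin k) ℝ)
    (hinv : (A + B * F) * V = V * X)
    (hE : LinearMap.range E.mulVecLin ≤ LinearMap.range V.mulVecLin)
    (hH : LinearMap.range V.mulVecLin ≤ LinearMap.ker H.mulVecLin) :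
    ∀ j : ℕ, H * (A + B * F) ^ j * E = 0 := by
  have hpow : ∀ j : ℕ, (A + B * F) ^ j * V = V * X ^ j := by
    intro j
    induction j with
    | zero => simp
    | succ j ih =>
      rw [pow_succ, pow_succ, Matrix.mul_assoc, hinv, ← Matrix.mul_assoc, ih, Matrix.mul_assoc]
  intro j
  ext i c
  have key : ((A + B * F) ^ j * E).mulVec (Pi.single c 1) ∈
      LinearMap.range V.mulVecLin := by
    obtain ⟨w, hw⟩ := hE ⟨Pi.single c 1, rfl⟩
    refine ⟨X ^ j *ᵥ w, ?_⟩
    simp only [mulVecLin_apply] at hw ⊢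
    rw [mulVec_mulVec, ← hpow j, ← mulVec_mulVec, hw, mulVec_mulVec]
  have h0 := hH key
  simp only [LinearMap.mem_ker, mulVecLin_apply, mulVec_mulVec] at h0
  have h1 : (H * ((A + B * F) ^ j * E)).mulVec (Pi.single c 1) i = 0 := by
    rw [h0]; rfl
  rw [mulVec_single] at h1
  rw [Matrix.mul_assoc]
  simpa using h1
end

section
/- Let A ∈ ℝ^{n×n}, B ∈ ℝ^{n×m}, and let W ⊆ ℝ^n be a subspace satisfying A·W ⊆ W + range(B) (W is (A,B)-controlled invariant). Let V ∈ ℝ^{n×k} be a matrix whose columns form a basis of W. Then there exist F ∈ ℝ^{m×n} and X ∈ ℝ^{k×k} such that (A+BF)V = VX. -/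
open Matrix

/-- Any `(A,B)`-controlled invariant subspace `W` (i.e. `AW ⊆ W + range B`), with basis
given by the columns of `V`, admits a "friend" feedback `F` making it `(A+BF)`-invariant:
there are `F, X` with `(A+BF)V = VX`. -/
theorem controlled_invariant_friend {n m k : ℕ}
    (A : Matrix (Fin n) (Fin n) ℝ) (B : Matrix (Fin n) (Fin m) ℝ)
    (W : Submodule ℝ (Fin n → ℝ))
    (hW : ∀ w ∈ W, A.mulVec w ∈ W ⊔ LinearMap.range B.mulVecLin)
    (V : Matrix (Fin n) (Fin k) ℝ)
    (hVrange : LinearMap.range V.mulVecLin = W)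
    (hVinj : Function.Injective V.mulVecLin) :
    ∃ (F : Matrix (Fin m) (Fin n) ℝ) (X : Matrix (Fin k) (Fin k) ℝ),
      (A + B * F) * V = V * X := by
  -- for each basis column, decompose A v_i = V x_i + B u_i
  have h : ∀ i : Fin k, ∃ (x : Fin k → ℝ) (u : Fin m → ℝ),
      A.mulVec (V.mulVec (Pi.single i 1)) = V.mulVec x + B.mulVec u := by
    intro i
    have hmem : V.mulVec (Pi.single i 1) ∈ W := by
      rw [← hVrange]; exact ⟨Pi.single i 1, rfl⟩
    obtain ⟨y, hy, z, hz, hyz⟩ := Submodule.mem_sup.mp (hW _ hmem)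
    rw [← hVrange] at hy
    obtain ⟨x, hx⟩ := hy
    obtain ⟨u, hu⟩ := hz
    exact ⟨x, u, by rw [← hyz, ← hx, ← hu]; rfl⟩
  choose x u hxu using h
  set X : Matrix (Fin k) (Fin k) ℝ := Matrix.of fun r c => x c r with hX
  set U : Matrix (Fin m) (Fin k) ℝ := Matrix.of fun r c => u c r with hU
  -- left inverse of V
  obtain ⟨g, hg⟩ := (V.mulVecLin).exists_leftInverse_of_injective
    (LinearMap.ker_eq_bot.mpr hVinj)
  set G : Matrix (Fin k) (Fin n) ℝ := LinearMap.toMatrix' g with hG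
  have hGV : G * V = 1 := by
    have : (G * V).mulVecLin = (1 : Matrix (Fin k) (Fin k) ℝ).mulVecLin := by
      rw [Matrix.mulVecLin_mul, Matrix.mulVecLin_one, hG]
      have : (LinearMap.toMatrix' g).mulVecLin = g := by
        rw [← Matrix.toLin'_apply', Matrix.toLin'_toMatrix']
      rw [this, hg]
    exact Matrix.toLin'.injective this
  refine ⟨-(U * G), X, ?_⟩
  have key : A * V = V * X + B * U := by
    ext r c
    have := congrFun (hxu c) r
    simp only [Matrix.mulVec, dotProduct, Pi.single_apply, mul_ite, mul_one,
      mul_zero, Finset.sum_ite_eq', Finset.mem_univ, if_true, Pi.add_apply] at this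
    simp only [Matrix.add_apply, Matrix.mul_apply, hX, hU, Matrix.of_apply]
    rw [this]
  have h2 : B * -(U * G) * V = -(B * (U * (G * V))) := by
    rw [Matrix.mul_neg, Matrix.neg_mul, Matrix.mul_assoc, Matrix.mul_assoc]
  rw [Matrix.add_mul, h2, hGV, Matrix.mul_one, key]
  abel
end

section
/- Let V ∈ ℝ^{n×k} have full column rank and suppose range(V) + range(B) = ℝ^n for B ∈ ℝ^{n×m}. Then the linear map (X, F) ↦ VX − BFV, from ℝ^{k×k} × ℝ^{m×n} to ℝ^{n×k}, is surjective. -/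
open Matrix

/-- If `V` has full column rank and `range V + range B = ℝⁿ`, then
`(X, F) ↦ VX − BFV` is surjective onto `ℝ^{n×k}`. -/
theorem dd_constraint_surjective {n m k : ℕ}
    (B : Matrix (Fin n) (Fin m) ℝ) (V : Matrix (Fin n) (Fin k) ℝ)
    (hV : Function.Injective V.mulVecLin)
    (hspan : LinearMap.range V.mulVecLin ⊔ LinearMap.range B.mulVecLin = ⊤) :
    Function.Surjective
      (fun XF : Matrix (Fin k) (Fin k) ℝ × Matrix (Fin m) (Fin n) ℝ =>
        V * XF.1 - B * XF.2 * V) := by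
  intro Y
  have hdec : ∀ j, ∃ a c, V.mulVec a + B.mulVec c = fun i => Y i j := by
    intro j
    have hmem : (fun i => Y i j) ∈
        LinearMap.range V.mulVecLin ⊔ LinearMap.range B.mulVecLin := by
      rw [hspan]; trivial
    rcases Submodule.mem_sup.mp hmem with ⟨u, ⟨a, ha⟩, v, ⟨c, hc⟩, huv⟩
    refine ⟨a, c, ?_⟩
    rw [← ha, ← hc] at huv
    simpa [mulVecLin_apply] using huv
  choose a c h using hdec
  set A : Matrix (Fin k) (Fin k) ℝ := fun i j => a j i with hA
  set C : Matrix (Fin m) (Fin k) ℝ := fun i j => c j i with hC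
  obtain ⟨g, hg⟩ := V.mulVecLin.exists_leftInverse_of_injective
    (LinearMap.ker_eq_bot.mpr hV)
  set L : Matrix (Fin k) (Fin n) ℝ := LinearMap.toMatrix' g with hL
  have hLV : L * V = 1 := by
    have h1 : LinearMap.toMatrix' (g.comp V.mulVecLin) =
        L * LinearMap.toMatrix' V.mulVecLin := LinearMap.toMatrix'_comp g V.mulVecLin
    rw [hg] at h1
    rw [← Matrix.toLin'_apply' V] at h1
    rw [LinearMap.toMatrix'_toLin'] at h1
    simpa using h1.symm
  refine ⟨(A, -(C * L)), ?_⟩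
  have key : B * -(C * L) * V = -(B * C) := by
    rw [Matrix.mul_neg, Matrix.neg_mul, Matrix.mul_assoc, Matrix.mul_assoc, hLV,
      Matrix.mul_one]
  simp only [key, sub_neg_eq_add]
  ext i j
  have := congrFun (h j) i
  rw [Matrix.add_apply, Matrix.mul_apply, Matrix.mul_apply]
  simpa [Matrix.add_apply, Matrix.mul_apply, mulVec, dotProduct, hA, hC] using this
end
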